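/- Recovery of the Minkowski metric from path valuation: let x, y ∈ ℝⁿ (n ≥ 2) with y − x ∈ Λ = {v : v₀ ≥ ‖v⃗‖}. Then the supremum, over all continuously differentiable causal paths a : [0,1] → ℝⁿ with a(0) = x, a(1) = y and a'(t) ∈ Λ for all t, of the proper elapsed time ∫₀¹ γ̲(a'(t)) dt equals γ̲(y − x) = √(((y−x)₀)² − ‖(y−x)⃗‖²), and this supremum is attained by the straight-line path a(t) = x + t(y − x). -/

import Mathlib

open Finset

/-- Euclidean norm of the spatial part `v⃗ = (v₁, …, v_{n+1})` of a vector in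
the standard Lorentz vector space `ℝ^{n+2}` (so the dimension is `≥ 2`). -/
noncomputable def sNorm {n : ℕ} (v : Fin (n + 2) → ℝ) : ℝ :=
  Real.sqrt (∑ i ∈ univ.filter (fun i : Fin (n + 2) => i ≠ 0), (v i) ^ 2)

/-- The closed future cone `Λ = {v : v₀ ≥ ‖v⃗‖}`. -/
def Lam {n : ℕ} : Set (Fin (n + 2) → ℝ) := {v | sNorm v ≤ v 0}

/-- The Lorentz antinorm `γ̲(v) = √(v₀² − ‖v⃗‖²)`, defined and nonnegative on `Λ`. -/
noncomputable def anorm {n : ℕ} (v : Fin (n + 2) → ℝ) : ℝ :=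
  Real.sqrt ((v 0) ^ 2 - (sNorm v) ^ 2)

/-!
The Minkowski form `⟨u, v⟩ = u₀v₀ - u⃗·v⃗` satisfies the reversed Cauchy–Schwarz inequality
`γ̲(u) γ̲(w) ≤ ⟨u, w⟩` on `Λ`. Fixing `u ∈ Λ` and integrating it along a causal path from `x`
to `y`, the fundamental theorem of calculus bounds the proper time `T` by
`γ̲(u) T ≤ ⟨u, y - x⟩`. For `u = (y - x) + ε e₀` with `ε > 0` the right side is at most
`γ̲(u)²` and `γ̲(u) > 0`, so `T ≤ γ̲(u)`; letting `ε → 0` gives `T ≤ γ̲(y - x)`, and the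
straight line attains this value.
-/

section Minkowski

variable {n : ℕ}

noncomputable def lorentzInner (u v : Fin (n + 2) → ℝ) : ℝ :=
  u 0 * v 0 - ∑ i ∈ univ.filter (fun i : Fin (n + 2) => i ≠ 0), u i * v i

lemma sNorm_nonneg (v : Fin (n + 2) → ℝ) : 0 ≤ sNorm v := Real.sqrt_nonneg _

lemma sNorm_sq (v : Fin (n + 2) → ℝ) :
    sNorm v ^ 2 = ∑ i ∈ univ.filter (fun i : Fin (n + 2) => i ≠ 0), v i ^ 2 :=
  Real.sq_sqrt (sum_nonneg fun _ _ => sq_nonneg _)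

lemma continuous_anorm : Continuous (anorm : (Fin (n + 2) → ℝ) → ℝ) := by
  unfold anorm sNorm
  fun_prop

lemma continuous_lorentzInner (u : Fin (n + 2) → ℝ) : Continuous (lorentzInner u) := by
  unfold lorentzInner
  fun_prop

lemma lorentzInner_sub_right (u v w : Fin (n + 2) → ℝ) :
    lorentzInner u (v - w) = lorentzInner u v - lorentzInner u w := by
  simp only [lorentzInner, Pi.sub_apply, mul_sub, sum_sub_distrib]
  ring

lemma lorentzInner_self (v : Fin (n + 2) → ℝ) :
    lorentzInner v v = v 0 ^ 2 - sNorm v ^ 2 := by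
  simp only [lorentzInner, sNorm_sq, ← sq]

lemma anorm_sq_of_mem_Lam {v : Fin (n + 2) → ℝ} (hv : v ∈ Lam) :
    anorm v ^ 2 = lorentzInner v v := by
  have hv' : sNorm v ≤ v 0 := hv
  rw [anorm, lorentzInner_self, Real.sq_sqrt]
  nlinarith [sNorm_nonneg v]

lemma anorm_mul_anorm_le_lorentzInner {u v : Fin (n + 2) → ℝ} (hu : u ∈ Lam) (hv : v ∈ Lam) :
    anorm u * anorm v ≤ lorentzInner u v := by
  have hu' : sNorm u ≤ u 0 := hu
  have hv' : sNorm v ≤ v 0 := hv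
  have hun := sNorm_nonneg u
  have hvn := sNorm_nonneg v
  have hCS := sum_mul_sq_le_sq_mul_sq (univ.filter (fun i : Fin (n + 2) => i ≠ 0)) u v
  rw [← sNorm_sq, ← sNorm_sq] at hCS
  have hspatial : ∑ i ∈ univ.filter (fun i : Fin (n + 2) => i ≠ 0), u i * v i
      ≤ sNorm u * sNorm v := abs_le_of_sq_le_sq' (by nlinarith) (by positivity) |>.2
  have htime : sNorm u * sNorm v ≤ u 0 * v 0 := mul_le_mul hu' hv' hvn (hun.trans hu')
  have hlower : u 0 * v 0 - sNorm u * sNorm v ≤ lorentzInner u v := by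
    unfold lorentzInner; linarith
  have hsq : (u 0 ^ 2 - sNorm u ^ 2) * (v 0 ^ 2 - sNorm v ^ 2) ≤ lorentzInner u v ^ 2 := by
    nlinarith [sq_nonneg (u 0 * sNorm v - v 0 * sNorm u)]
  calc anorm u * anorm v
      = Real.sqrt ((u 0 ^ 2 - sNorm u ^ 2) * (v 0 ^ 2 - sNorm v ^ 2)) := by
        rw [anorm, anorm, Real.sqrt_mul (by nlinarith)]
    _ ≤ Real.sqrt (lorentzInner u v ^ 2) := Real.sqrt_le_sqrt hsq
    _ = lorentzInner u v := Real.sqrt_sq (by linarith)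

end Minkowski

section TimeShift

variable {n : ℕ}

def timeShift (v : Fin (n + 2) → ℝ) (ε : ℝ) : Fin (n + 2) → ℝ := v + Pi.single 0 ε

lemma timeShift_apply_zero (v : Fin (n + 2) → ℝ) (ε : ℝ) : timeShift v ε 0 = v 0 + ε := by
  simp [timeShift]

lemma timeShift_apply_of_ne (v : Fin (n + 2) → ℝ) (ε : ℝ) {i : Fin (n + 2)} (hi : i ≠ 0) :
    timeShift v ε i = v i := by
  simp [timeShift, hi]

@[simp]
lemma timeShift_zero (v : Fin (n + 2) → ℝ) : timeShift v 0 = v := by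
  simp [timeShift]

lemma continuous_timeShift (v : Fin (n + 2) → ℝ) : Continuous (timeShift v) :=
  continuous_const.add (continuous_single (A := fun _ : Fin (n + 2) => ℝ) 0)

lemma sNorm_timeShift (v : Fin (n + 2) → ℝ) (ε : ℝ) : sNorm (timeShift v ε) = sNorm v := by
  unfold sNorm
  congr 1
  exact sum_congr rfl fun i hi => by rw [timeShift_apply_of_ne v ε (mem_filter.1 hi).2]

lemma timeShift_mem_Lam {v : Fin (n + 2) → ℝ} (hv : v ∈ Lam) {ε : ℝ} (hε : 0 ≤ ε) :
    timeShift v ε ∈ Lam := by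
  have hv' : sNorm v ≤ v 0 := hv
  show sNorm (timeShift v ε) ≤ timeShift v ε 0
  rw [sNorm_timeShift, timeShift_apply_zero]
  linarith

lemma anorm_timeShift_pos {v : Fin (n + 2) → ℝ} (hv : v ∈ Lam) {ε : ℝ} (hε : 0 < ε) :
    0 < anorm (timeShift v ε) := by
  have hv' : sNorm v ≤ v 0 := hv
  rw [anorm, Real.sqrt_pos, timeShift_apply_zero, sNorm_timeShift]
  nlinarith [sNorm_nonneg v]

lemma lorentzInner_timeShift_le_anorm_sq {v : Fin (n + 2) → ℝ} (hv : v ∈ Lam) {ε : ℝ}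
    (hε : 0 ≤ ε) : lorentzInner (timeShift v ε) v ≤ anorm (timeShift v ε) ^ 2 := by
  have hv' : sNorm v ≤ v 0 := hv
  have hspatial : ∑ i ∈ univ.filter (fun i : Fin (n + 2) => i ≠ 0), timeShift v ε i * v i
      = sNorm v ^ 2 := by
    rw [sNorm_sq]
    exact sum_congr rfl fun i hi => by rw [timeShift_apply_of_ne v ε (mem_filter.1 hi).2, sq]
  rw [anorm_sq_of_mem_Lam (timeShift_mem_Lam hv hε), lorentzInner_self, lorentzInner,
    hspatial, sNorm_timeShift, timeShift_apply_zero]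
  nlinarith [sNorm_nonneg v]

open Filter Topology in
/-- `γ̲(v)` is the infimum of `⟨u, v⟩ / γ̲(u)` over `u ∈ Λ`, approached along `u = v + ε e₀`. -/
lemma le_anorm_of_forall_anorm_mul_le {v : Fin (n + 2) → ℝ} (hv : v ∈ Lam) {T : ℝ}
    (hT : ∀ u ∈ Lam, anorm u * T ≤ lorentzInner u v) : T ≤ anorm v := by
  have hshift : ∀ ε > 0, T ≤ anorm (timeShift v ε) := fun ε hε =>
    le_of_mul_le_mul_left
      (calc anorm (timeShift v ε) * T
          ≤ lorentzInner (timeShift v ε) v := hT _ (timeShift_mem_Lam hv hε.le)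
        _ ≤ anorm (timeShift v ε) ^ 2 := lorentzInner_timeShift_le_anorm_sq hv hε.le
        _ = anorm (timeShift v ε) * anorm (timeShift v ε) := sq _)
      (anorm_timeShift_pos hv hε)
  have hlim : Tendsto (fun ε => anorm (timeShift v ε)) (𝓝[>] 0) (𝓝 (anorm v)) := by
    refine tendsto_nhdsWithin_of_tendsto_nhds ?_
    simpa only [Function.comp_def, timeShift_zero] using
      (continuous_anorm.comp (continuous_timeShift v)).tendsto 0
  exact ge_of_tendsto hlim (eventually_nhdsWithin_of_forall hshift)

end TimeShift

section CausalPath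

variable {n : ℕ}

lemma integral_lorentzInner_deriv (u : Fin (n + 2) → ℝ) {a a' : ℝ → Fin (n + 2) → ℝ}
    (ha : ∀ t ∈ Set.Icc (0 : ℝ) 1, HasDerivAt a (a' t) t)
    (ha' : ContinuousOn a' (Set.Icc (0 : ℝ) 1)) :
    ∫ t in (0 : ℝ)..1, lorentzInner u (a' t) = lorentzInner u (a 1 - a 0) := by
  have hderiv : ∀ t ∈ Set.uIcc (0 : ℝ) 1,
      HasDerivAt (fun s => lorentzInner u (a s)) (lorentzInner u (a' t)) t := by
    intro t ht
    rw [Set.uIcc_of_le zero_le_one] at ht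
    have hcomp := hasDerivAt_pi.1 (ha t ht)
    exact ((hcomp 0).const_mul _).sub (HasDerivAt.fun_sum fun i _ => (hcomp i).const_mul _)
  have hint : IntervalIntegrable (fun t => lorentzInner u (a' t)) MeasureTheory.volume 0 1 :=
    ((continuous_lorentzInner u).comp_continuousOn ha').intervalIntegrable_of_Icc zero_le_one
  rw [intervalIntegral.integral_eq_sub_of_hasDerivAt hderiv hint, lorentzInner_sub_right]

lemma anorm_mul_integral_anorm_le {u : Fin (n + 2) → ℝ} (hu : u ∈ Lam)
    {a a' : ℝ → Fin (n + 2) → ℝ} (ha : ∀ t ∈ Set.Icc (0 : ℝ) 1, HasDerivAt a (a' t) t)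
    (ha' : ContinuousOn a' (Set.Icc (0 : ℝ) 1)) (hcausal : ∀ t ∈ Set.Icc (0 : ℝ) 1, a' t ∈ Lam) :
    anorm u * ∫ t in (0 : ℝ)..1, anorm (a' t) ≤ lorentzInner u (a 1 - a 0) := by
  rw [← intervalIntegral.integral_const_mul, ← integral_lorentzInner_deriv u ha ha']
  have hcont : ∀ f : (Fin (n + 2) → ℝ) → ℝ, Continuous f →
      IntervalIntegrable (fun t => f (a' t)) MeasureTheory.volume 0 1 := fun f hf =>
    (hf.comp_continuousOn ha').intervalIntegrable_of_Icc zero_le_one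
  exact intervalIntegral.integral_mono_on zero_le_one
    (hcont _ (continuous_const.mul continuous_anorm)) (hcont _ (continuous_lorentzInner u))
    fun t ht => anorm_mul_anorm_le_lorentzInner hu (hcausal t ht)

end CausalPath

/-- recovery of the Minkowski metric from path valuation. For
`y − x ∈ Λ`, the supremum over all continuously differentiable causal paths
from `x` to `y` of the proper elapsed time `∫₀¹ γ̲(a'(t)) dt` equals
`γ̲(y − x)`, and it is attained (witnessed by the straight-line path
`a t = x + t • (y − x)`); i.e. `γ̲(y − x)` is the greatest element of the set
of proper elapsed times of such paths. -/
theorem isGreatest_proper_time {n : ℕ} (x y : Fin (n + 2) → ℝ)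
    (h : y - x ∈ Lam) :
    IsGreatest
      {T : ℝ | ∃ a a' : ℝ → (Fin (n + 2) → ℝ),
        (∀ t ∈ Set.Icc (0 : ℝ) 1, HasDerivAt a (a' t) t) ∧
        ContinuousOn a' (Set.Icc (0 : ℝ) 1) ∧
        (∀ t ∈ Set.Icc (0 : ℝ) 1, a' t ∈ Lam) ∧
        a 0 = x ∧ a 1 = y ∧
        T = ∫ t in (0 : ℝ)..1, anorm (a' t)}
      (anorm (y - x))
    ∧ (anorm (y - x) = ∫ t in (0 : ℝ)..1,
        anorm (deriv (fun s : ℝ => x + s • (y - x)) t)) := by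
  have hline : ∀ t : ℝ, HasDerivAt (fun s : ℝ => x + s • (y - x)) (y - x) t := fun t => by
    simpa using ((hasDerivAt_id t).smul_const (y - x)).const_add x
  have hline_time : anorm (y - x) = ∫ t in (0 : ℝ)..1,
      anorm (deriv (fun s : ℝ => x + s • (y - x)) t) := by
    simp only [fun t => (hline t).deriv, intervalIntegral.integral_const, sub_zero, one_smul]
  refine ⟨⟨⟨fun s => x + s • (y - x), fun _ => y - x, fun t _ => hline t, continuousOn_const,
    fun _ _ => h, by simp, by simp, by simp⟩, ?_⟩, hline_time⟩
  rintro T ⟨a, a', ha, ha', hcausal, rfl, rfl, rfl⟩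
  exact le_anorm_of_forall_anorm_mul_le h fun u hu =>
    anorm_mul_integral_anorm_le hu ha ha' hcausal
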